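/- Let R be a local ring with maximal ideal M such that M contains a non-zero-divisor of R. Then (M : M) ≠ R if and only if M is a non-principal divisorial ideal of R. -/

import Mathlib

/-- The colon construction `(J₁ : J₂) = {x ∈ T(R) : x·J₂ ⊆ J₁}` for subsets of the total
quotient ring `T(R)`. -/
def colonSet (R : Type*) [CommRing R] (J₁ J₂ : Set (FractionRing R)) :
    Set (FractionRing R) :=
  {x : FractionRing R | ∀ j ∈ J₂, x * j ∈ J₁}

/-- The image of `R` in its total quotient ring `T(R)`, as a set. -/
def Rset (R : Type*) [CommRing R] : Set (FractionRing R) :=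
  Set.range (algebraMap R (FractionRing R))

/-- The image of an ideal of `R` in the total quotient ring `T(R)`. -/
def idealSet (R : Type*) [CommRing R] (I : Ideal R) : Set (FractionRing R) :=
  algebraMap R (FractionRing R) '' (I : Set R)

/-- An ideal `I` of `R` is divisorial if `I = (R : (R : I))`. -/
def IsDivisorial (R : Type*) [CommRing R] (I : Ideal R) : Prop :=
  idealSet R I = colonSet R (Rset R) (colonSet R (Rset R) (idealSet R I))

/-!
Write `M` for the maximal ideal. Always `R ⊆ (M : M) ⊆ (R : M)`, and for a local ring `M` is
divisorial exactly when `(R : M) ⊄ R`: then `(R : (R : M))` lies in `R` (as `1 ∈ (R : M)`) and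
contains no unit `r`, since `r⁻¹ · r u = u` would put every `u ∈ (R : M)` into `R`.

If some `u ∈ (R : M)` lies outside `(M : M)`, then `u m₀ ∉ M` for some `m₀ ∈ M`, so `u m₀` is a
unit of `R` and `m = (u m₀)⁻¹ m₀` satisfies `u m = 1`; hence `M = m R`. Conversely, if `M = m R`
with `m` regular (forced by the regular element of `M`), then `u m = m s` gives `u = s ∈ R` for
every `u ∈ (M : M)`.
-/

section CommRing

variable {R : Type*} [CommRing R]

theorem Rset_subset_colonSet_idealSet (I : Ideal R) :
    Rset R ⊆ colonSet R (idealSet R I) (idealSet R I) := by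
  rintro _ ⟨r, rfl⟩ _ ⟨m, hm, rfl⟩
  exact ⟨r * m, I.mul_mem_left r hm, map_mul _ r m⟩

theorem colonSet_idealSet_subset_colonSet_Rset (I : Ideal R) :
    colonSet R (idealSet R I) (idealSet R I) ⊆ colonSet R (Rset R) (idealSet R I) :=
  fun _ hx j hj => (Set.image_subset_range _ _) (hx j hj)

theorem one_notMem_idealSet {I : Ideal R} (hI : I ≠ ⊤) : (1 : FractionRing R) ∉ idealSet R I := by
  rintro ⟨m, hm, hm1⟩
  rw [← map_one (algebraMap R (FractionRing R))] at hm1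
  exact hI (I.eq_top_of_isUnit_mem hm (IsFractionRing.injective R _ hm1 ▸ isUnit_one))

theorem colonSet_Rset_colonSet_Rset_subset_Rset (I : Ideal R) :
    colonSet R (Rset R) (colonSet R (Rset R) (idealSet R I)) ⊆ Rset R := by
  intro z hz
  simpa using hz 1 ((Rset_subset_colonSet_idealSet I).trans
    (colonSet_idealSet_subset_colonSet_Rset I) ⟨1, map_one _⟩)

theorem idealSet_subset_colonSet_colonSet (I : Ideal R) :
    idealSet R I ⊆ colonSet R (Rset R) (colonSet R (Rset R) (idealSet R I)) := by
  rintro _ ⟨m, hm, rfl⟩ y hy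
  rw [mul_comm]
  exact hy _ ⟨m, hm, rfl⟩

theorem eq_span_singleton_of_mul_eq_one {I : Ideal R} {u : FractionRing R}
    (hu : u ∈ colonSet R (Rset R) (idealSet R I)) {m : R} (hm : m ∈ I)
    (hum : u * algebraMap R (FractionRing R) m = 1) : I = Ideal.span {m} := by
  refine le_antisymm (fun x hx => ?_) (Ideal.span_le.mpr (Set.singleton_subset_iff.mpr hm))
  obtain ⟨s, hs⟩ := hu _ ⟨x, hx, rfl⟩
  refine Ideal.mem_span_singleton'.mpr ⟨s, IsFractionRing.injective R (FractionRing R) ?_⟩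
  calc algebraMap R _ (s * m) = u * algebraMap R _ x * algebraMap R _ m := by rw [map_mul, hs]
    _ = (u * algebraMap R _ m) * algebraMap R _ x := by ring
    _ = algebraMap R _ x := by rw [hum, one_mul]

theorem colonSet_idealSet_span_singleton_subset_Rset {m : R} (hm : m ∈ nonZeroDivisors R) :
    colonSet R (idealSet R (Ideal.span {m})) (idealSet R (Ideal.span {m})) ⊆ Rset R := by
  intro u hu
  obtain ⟨m', hm', hum⟩ := hu _ ⟨m, Ideal.mem_span_singleton_self m, rfl⟩
  obtain ⟨s, rfl⟩ := Ideal.mem_span_singleton.mp hm'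
  refine ⟨s, (IsLocalization.map_units (FractionRing R) ⟨m, hm⟩).mul_left_cancel ?_⟩
  rw [← map_mul, hum, mul_comm]

end CommRing

section IsLocalRing

open IsLocalRing

variable {R : Type*} [CommRing R] [IsLocalRing R]

theorem colonSet_Rset_colonSet_Rset_subset_idealSet_maximalIdeal {I : Ideal R}
    (hI : ¬ colonSet R (Rset R) (idealSet R I) ⊆ Rset R) :
    colonSet R (Rset R) (colonSet R (Rset R) (idealSet R I)) ⊆
      idealSet R (maximalIdeal R) := by
  intro z hz
  obtain ⟨r, rfl⟩ := colonSet_Rset_colonSet_Rset_subset_Rset I hz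
  refine ⟨r, not_not.mp fun hr => hI fun u hu => ?_, rfl⟩
  obtain ⟨v, hv⟩ := ((mem_maximalIdeal r).not.mp hr |> not_not.mp).exists_left_inv
  obtain ⟨s, hs⟩ := hz u hu
  refine ⟨v * s, ?_⟩
  rw [map_mul, hs, ← mul_assoc, ← map_mul, hv, map_one, one_mul]

theorem isDivisorial_maximalIdeal_iff :
    IsDivisorial R (maximalIdeal R) ↔
      ¬ colonSet R (Rset R) (idealSet R (maximalIdeal R)) ⊆ Rset R := by
  refine ⟨fun hdiv hsub => one_notMem_idealSet (maximalIdeal.isMaximal R).ne_top ?_,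
    fun h => (idealSet_subset_colonSet_colonSet _).antisymm
      (colonSet_Rset_colonSet_Rset_subset_idealSet_maximalIdeal h)⟩
  rw [hdiv]
  intro u hu
  simpa using hsub hu

theorem isPrincipal_maximalIdeal_of_not_colonSet_subset
    (h : ¬ colonSet R (Rset R) (idealSet R (maximalIdeal R)) ⊆
      colonSet R (idealSet R (maximalIdeal R)) (idealSet R (maximalIdeal R))) :
    (maximalIdeal R).IsPrincipal := by
  obtain ⟨u, hu, huM⟩ := Set.not_subset.mp h
  obtain ⟨_, ⟨m₀, hm₀, rfl⟩, hum₀⟩ : ∃ j ∈ idealSet R (maximalIdeal R),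
      u * j ∉ idealSet R (maximalIdeal R) := by
    simpa [colonSet] using huM
  obtain ⟨r, hr⟩ := hu _ ⟨m₀, hm₀, rfl⟩
  have hrM : r ∉ maximalIdeal R := fun h => hum₀ ⟨r, h, hr⟩
  obtain ⟨v, hv⟩ := ((mem_maximalIdeal r).not.mp hrM |> not_not.mp).exists_left_inv
  refine ⟨v * m₀, eq_span_singleton_of_mul_eq_one hu ((maximalIdeal R).mul_mem_left v hm₀) ?_⟩
  rw [map_mul, mul_left_comm, ← hr, ← map_mul, hv, map_one]

end IsLocalRing

open IsLocalRing in
theorem stmt18 {R : Type*} [CommRing R] [IsLocalRing R]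
    (hreg : ∃ x ∈ maximalIdeal R, x ∈ nonZeroDivisors R) :
    colonSet R (idealSet R (maximalIdeal R)) (idealSet R (maximalIdeal R)) ≠ Rset R ↔
      ¬ (maximalIdeal R).IsPrincipal ∧ IsDivisorial R (maximalIdeal R) := by
  rw [isDivisorial_maximalIdeal_iff]
  constructor
  · intro hne
    have hMM : ¬ colonSet R (idealSet R (maximalIdeal R)) (idealSet R (maximalIdeal R)) ⊆
        Rset R := fun h => hne (h.antisymm (Rset_subset_colonSet_idealSet _))
    refine ⟨fun ⟨m, hm⟩ => hMM ?_,
      fun h => hMM ((colonSet_idealSet_subset_colonSet_Rset _).trans h)⟩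
    obtain ⟨x, hxM, hx⟩ := hreg
    obtain ⟨c, rfl⟩ := Ideal.mem_span_singleton.mp (hm ▸ hxM)
    rw [hm]
    exact colonSet_idealSet_span_singleton_subset_Rset (mul_mem_nonZeroDivisors.mp hx).1
  · rintro ⟨hnp, hRM⟩ heq
    have hsub := not_not.mp (mt isPrincipal_maximalIdeal_of_not_colonSet_subset hnp)
    exact hRM (heq ▸ hsub)
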